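/- Let m ≥ 3, let P be a symmetric 2-index array on ℝ^m and let v ∈ ℝ^m. Then Σ_{i,j,k} P_{ij} v_k D(P,v)_{ijk} = ((m−2)/2)·Σ_{i,j,k} (D(P,v)_{ijk})². -/

import Mathlib

/-- The Kronecker delta on `Fin m`, regarded as a real 2-index array. -/
def kdelta (m : ℕ) (i j : Fin m) : ℝ := if i = j then 1 else 0

/-- The 3-index array `D(P,v)` associated with a 2-index array `P` and a vector `v`:
`D(P,v)_{ijk} = (1/(m−2))·[ v_k P_{ij} − v_j P_{ik}
  + (1/(m−1))·Σ_l v_l (P_{lk}δ_{ij} − P_{lj}δ_{ik})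
  − ((Σ_l P_{ll})/(m−1))·(v_kδ_{ij} − v_jδ_{ik}) ]`. -/
noncomputable def Dt (m : ℕ) (P : Fin m → Fin m → ℝ) (v : Fin m → ℝ)
    (i j k : Fin m) : ℝ :=
  (1 / ((m : ℝ) - 2)) *
    (v k * P i j - v j * P i k
      + (1 / ((m : ℝ) - 1)) * ∑ l, v l * (P l k * kdelta m i j - P l j * kdelta m i k)
      - ((∑ l, P l l) / ((m : ℝ) - 1)) * (v k * kdelta m i j - v j * kdelta m i k))

/-!
`D(P,v)` is `1/(m-2)` times the antisymmetrisation in `(j,k)` of the seed (`DtSeed`)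
`S_{ijk} = P_{ij} v_k + δ_{ij} f_k`, where the trace correction `f` makes `D` trace-free in `(i,j)`.
Pairing `D` with `(m-2) D = S_{ijk} - S_{ikj}`, skew-symmetry turns the right side into `2 S`,
and trace-freeness kills the `δ_{ij} f_k` part of `S`.
-/

open Finset

section SkewTraceless

variable {ι R : Type*} [Fintype ι] [CommRing R]

lemma sum_sub_swap_mul_of_skew {T : ι → ι → ι → R} (hT : ∀ i j k, T i k j = -T i j k)
    (g : ι → ι → ι → R) :
    ∑ i, ∑ j, ∑ k, (g i j k - g i k j) * T i j k = 2 * ∑ i, ∑ j, ∑ k, g i j k * T i j k := by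
  have hswap : ∑ i, ∑ j, ∑ k, g i k j * T i j k = -∑ i, ∑ j, ∑ k, g i j k * T i j k := by
    simp only [← sum_neg_distrib]
    refine sum_congr rfl fun i _ => ?_
    rw [sum_comm]
    refine sum_congr rfl fun j _ => sum_congr rfl fun k _ => ?_
    rw [hT]
    ring
  simp only [sub_mul, sum_sub_distrib, hswap]
  ring

lemma sum_ite_mul_eq_zero_of_traceless [DecidableEq ι] {T : ι → ι → ι → R}
    (hT : ∀ k, ∑ i, T i i k = 0) (f : ι → R) :
    ∑ i, ∑ j, ∑ k, (if i = j then 1 else 0) * f k * T i j k = 0 := by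
  simp only [ite_mul, one_mul, zero_mul, sum_ite_irrel, sum_const_zero, sum_ite_eq, mem_univ,
    if_true]
  rw [sum_comm]
  simp only [← mul_sum, hT, mul_zero, sum_const_zero]

end SkewTraceless

noncomputable def DtSeed (m : ℕ) (P : Fin m → Fin m → ℝ) (v : Fin m → ℝ) (i j k : Fin m) : ℝ :=
  P i j * v k + kdelta m i j * ((∑ l, v l * P l k - (∑ l, P l l) * v k) / ((m : ℝ) - 1))

lemma Dt_eq_mul_DtSeed_sub_swap (m : ℕ) (P : Fin m → Fin m → ℝ) (v : Fin m → ℝ) (i j k : Fin m) :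
    Dt m P v i j k = 1 / ((m : ℝ) - 2) * (DtSeed m P v i j k - DtSeed m P v i k j) := by
  have hsum : ∑ l, v l * (P l k * kdelta m i j - P l j * kdelta m i k)
      = kdelta m i j * ∑ l, v l * P l k - kdelta m i k * ∑ l, v l * P l j := by
    rw [mul_sum, mul_sum, ← sum_sub_distrib]
    exact sum_congr rfl fun l _ => by ring
  rw [Dt, hsum, DtSeed, DtSeed]
  ring

lemma Dt_skew (m : ℕ) (P : Fin m → Fin m → ℝ) (v : Fin m → ℝ) (i j k : Fin m) :
    Dt m P v i k j = -Dt m P v i j k := by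
  rw [Dt_eq_mul_DtSeed_sub_swap, Dt_eq_mul_DtSeed_sub_swap]
  ring

lemma sum_DtSeed_sub_swap_diag {m : ℕ} (hm : (m : ℝ) - 1 ≠ 0) (P : Fin m → Fin m → ℝ)
    (v : Fin m → ℝ) (k : Fin m) : ∑ i, (DtSeed m P v i i k - DtSeed m P v i k i) = 0 := by
  simp only [DtSeed, kdelta, if_true, one_mul, ite_mul, zero_mul, sum_sub_distrib,
    sum_add_distrib, sum_ite_eq', mem_univ, sum_const, card_univ, Fintype.card_fin, nsmul_eq_mul]
  simp only [← sum_mul, mul_comm (P _ k)]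
  field_simp
  ring

lemma Dt_traceless {m : ℕ} (hm : (m : ℝ) - 1 ≠ 0) (P : Fin m → Fin m → ℝ) (v : Fin m → ℝ)
    (k : Fin m) : ∑ i, Dt m P v i i k = 0 := by
  simp only [Dt_eq_mul_DtSeed_sub_swap, ← mul_sum, sum_DtSeed_sub_swap_diag hm, mul_zero]

theorem contraction_Dt_eq_normsq_general (m : ℕ) (hm : 3 ≤ m) (P : Fin m → Fin m → ℝ)
    (v : Fin m → ℝ) :
    (∑ i, ∑ j, ∑ k, P i j * v k * Dt m P v i j k) =
      (((m : ℝ) - 2) / 2) * ∑ i, ∑ j, ∑ k, (Dt m P v i j k) ^ 2 := by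
  have hm3 : (3 : ℝ) ≤ m := by exact_mod_cast hm
  have hm1 : (m : ℝ) - 1 ≠ 0 := by linarith
  have hm2 : (m : ℝ) - 2 ≠ 0 := by linarith
  have key : ((m : ℝ) - 2) * ∑ i, ∑ j, ∑ k, (Dt m P v i j k) ^ 2
      = 2 * ∑ i, ∑ j, ∑ k, P i j * v k * Dt m P v i j k := calc
    _ = ∑ i, ∑ j, ∑ k, (((m : ℝ) - 2) * Dt m P v i j k) * Dt m P v i j k := by
      simp only [mul_sum, mul_assoc, sq]
    _ = ∑ i, ∑ j, ∑ k, (DtSeed m P v i j k - DtSeed m P v i k j) * Dt m P v i j k := by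
      simp only [Dt_eq_mul_DtSeed_sub_swap, ← mul_assoc, mul_one_div_cancel hm2, one_mul]
    _ = 2 * ∑ i, ∑ j, ∑ k, DtSeed m P v i j k * Dt m P v i j k :=
      sum_sub_swap_mul_of_skew (Dt_skew m P v) _
    _ = 2 * ∑ i, ∑ j, ∑ k, P i j * v k * Dt m P v i j k := by
      simp only [DtSeed, kdelta, add_mul, sum_add_distrib,
        sum_ite_mul_eq_zero_of_traceless (Dt_traceless hm1 P v), add_zero]
  linear_combination -key / 2

/-- Contracting `D(P,v)` against `P_{ij} v_k` produces `((m−2)/2)` times its squared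
norm: `Σ_{i,j,k} P_{ij} v_k D(P,v)_{ijk} = ((m−2)/2)·Σ_{i,j,k} (D(P,v)_{ijk})²`. -/
theorem contraction_Dt_eq_normsq (m : ℕ) (hm : 3 ≤ m) (P : Fin m → Fin m → ℝ)
    (hP : ∀ i j, P i j = P j i) (v : Fin m → ℝ) :
    (∑ i, ∑ j, ∑ k, P i j * v k * Dt m P v i j k) =
      (((m : ℝ) - 2) / 2) * ∑ i, ∑ j, ∑ k, (Dt m P v i j k) ^ 2 :=
  contraction_Dt_eq_normsq_general m hm P v
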